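/- Let X, Z ∈ ℝ^{d×r} with XᵀX invertible and max_i g_i(X) ≤ g_max. Then for every integer p ≥ 2, the p-th moment of the stochastic gradient satisfies E[(‖SG(X)‖_X*)^p] ≤ 2^{2p}·d^{2(p−1)}·g_max^{p/2}·‖XXᵀ−ZZᵀ‖_F^p. -/

import Mathlib

open Matrix BigOperators

noncomputable section

/-- Frobenius norm of a real matrix. -/
def frob {m n : ℕ} (A : Matrix (Fin m) (Fin n) ℝ) : ℝ :=
  Real.sqrt (∑ i, ∑ j, (A i j) ^ 2)

/-- Trace inner product `⟨A,B⟩ = tr(AᵀB)`. -/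
def mip {m n : ℕ} (A B : Matrix (Fin m) (Fin n) ℝ) : ℝ := (Aᵀ * B).trace

open Classical in
/-- Smallest eigenvalue of a Hermitian matrix (junk value 0 otherwise). -/
def lammin {n : ℕ} (M : Matrix (Fin n) (Fin n) ℝ) : ℝ :=
  if h : M.IsHermitian then ⨅ i, h.eigenvalues i else 0

/-- The positive semidefinite square root, as `Matrix.PosSemidef.sqrt` was defined in Mathlib
(Dec 2024). -/
def psdSqrtOld {n : ℕ} {A : Matrix (Fin n) (Fin n) ℝ} (hA : A.PosSemidef) :
    Matrix (Fin n) (Fin n) ℝ :=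
  hA.1.eigenvectorUnitary.1 * diagonal ((↑) ∘ (Real.sqrt ∘ hA.1.eigenvalues)) *
    (star hA.1.eigenvectorUnitary : Matrix (Fin n) (Fin n) ℝ)

/-- Local norm `‖V‖_X = ‖V (XᵀX)^{1/2}‖_F`. -/
def locNorm {d r : ℕ} (X V : Matrix (Fin d) (Fin r) ℝ) : ℝ :=
  frob (V * psdSqrtOld (Matrix.posSemidef_conjTranspose_mul_self X))

/-- Dual local norm `‖V‖_X* = ‖V (XᵀX)^{-1/2}‖_F`. -/
def dualNorm {d r : ℕ} (X V : Matrix (Fin d) (Fin r) ℝ) : ℝ :=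
  frob (V * (psdSqrtOld (Matrix.posSemidef_conjTranspose_mul_self X))⁻¹)

/-- Leverage score / coherence `g_k(X) = e_kᵀ X (XᵀX)⁻¹ Xᵀ e_k`. -/
def lev {d r : ℕ} (k : Fin d) (X : Matrix (Fin d) (Fin r) ℝ) : ℝ :=
  (X * (Xᴴ * X)⁻¹ * Xᴴ) k k

/-- Gradient of the leverage score `∇g_k(X)`. -/
def levGrad {d r : ℕ} (k : Fin d) (X : Matrix (Fin d) (Fin r) ℝ) :
    Matrix (Fin d) (Fin r) ℝ :=
  (2 : ℝ) • ((1 - X * (Xᴴ * X)⁻¹ * Xᴴ) * Matrix.single k k (1 : ℝ) * X * (Xᴴ * X)⁻¹)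

/-- Stochastic gradient sample `SG(X)` for the index pair `(i,j)`. -/
def SG {d r : ℕ} (X Z : Matrix (Fin d) (Fin r) ℝ) (i j : Fin d) :
    Matrix (Fin d) (Fin r) ℝ :=
  (2 * (d : ℝ) ^ 2 * ((X * Xᴴ - Z * Zᴴ) i j)) •
    ((Matrix.single i j (1 : ℝ) + Matrix.single j i (1 : ℝ)) * X)

/-
Whitening by `S = (XᵀX)^{1/2}` turns the leverage score `g_k(X)` into the squared norm of the
`k`-th row of `B = X S⁻¹`. With `M = XXᵀ − ZZᵀ`, the sample for the pair `(i, j)` is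
`2d² M_{ij} (e_ie_jᵀ + e_je_iᵀ) X`, and its dual norm involves the Frobenius norm of
`(e_ie_jᵀ + e_je_iᵀ) B`, which by the triangle inequality is at most `‖B_j‖ + ‖B_i‖ ≤ 2 √g_max`.
Summing the `p`-th powers over the `d²` pairs then only needs `∑ |M_{ij}|^p ≤ ‖M‖_F^p`, the
comparison of the `ℓᵖ` and `ℓ²` norms for `p ≥ 2`.
-/

section psdSqrtOld

variable {n : ℕ} {A : Matrix (Fin n) (Fin n) ℝ} (hA : A.PosSemidef)

lemma psdSqrtOld_isHermitian : (psdSqrtOld hA).IsHermitian := by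
  unfold psdSqrtOld Matrix.IsHermitian
  rw [conjTranspose_mul, conjTranspose_mul, diagonal_conjTranspose]
  simp [star_eq_conjTranspose, Matrix.mul_assoc]

lemma psdSqrtOld_mul_self : psdSqrtOld hA * psdSqrtOld hA = A := by
  set U : Matrix (Fin n) (Fin n) ℝ := hA.1.eigenvectorUnitary.1
  set D : Matrix (Fin n) (Fin n) ℝ := diagonal ((↑) ∘ (Real.sqrt ∘ hA.1.eigenvalues))
  have hU : star U * U = 1 := Unitary.coe_star_mul_self _
  have hD : D * D = diagonal (RCLike.ofReal ∘ hA.1.eigenvalues : Fin n → ℝ) := by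
    rw [diagonal_mul_diagonal]
    congr 1
    funext i
    simp [Real.mul_self_sqrt (hA.eigenvalues_nonneg i)]
  calc psdSqrtOld hA * psdSqrtOld hA = U * (D * D) * star U := by
        simp only [psdSqrtOld, U, D, Matrix.mul_assoc]
        rw [← Matrix.mul_assoc (star U) U, hU, Matrix.one_mul]
    _ = A := by
        conv_rhs => rw [hA.1.spectral_theorem]
        rw [hD, Unitary.conjStarAlgAut_apply]

end psdSqrtOld

section frob

variable {m n : ℕ}

attribute [local instance] Matrix.frobeniusNormedAddCommGroup Matrix.frobeniusNormedSpace

lemma frob_eq_norm (A : Matrix (Fin m) (Fin n) ℝ) : frob A = ‖A‖ := by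
  simp only [frob, frobenius_norm_def, Real.norm_eq_abs, Real.rpow_two, sq_abs,
    Real.sqrt_eq_rpow]

lemma frob_nonneg (A : Matrix (Fin m) (Fin n) ℝ) : 0 ≤ frob A :=
  Real.sqrt_nonneg _

lemma frob_sq (A : Matrix (Fin m) (Fin n) ℝ) : frob A ^ 2 = ∑ i, ∑ j, A i j ^ 2 :=
  Real.sq_sqrt (by positivity)

lemma frob_smul (c : ℝ) (A : Matrix (Fin m) (Fin n) ℝ) : frob (c • A) = |c| * frob A := by
  rw [frob_eq_norm, frob_eq_norm, norm_smul, Real.norm_eq_abs]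

lemma frob_add_le (A B : Matrix (Fin m) (Fin n) ℝ) : frob (A + B) ≤ frob A + frob B := by
  simpa only [frob_eq_norm] using norm_add_le A B

lemma abs_apply_le_frob (A : Matrix (Fin m) (Fin n) ℝ) (i : Fin m) (j : Fin n) :
    |A i j| ≤ frob A := by
  have h : A i j ^ 2 ≤ ∑ a, ∑ b, A a b ^ 2 :=
    calc A i j ^ 2 ≤ ∑ b, A i b ^ 2 :=
          Finset.single_le_sum (fun b _ => sq_nonneg (A i b)) (Finset.mem_univ j)
      _ ≤ ∑ a, ∑ b, A a b ^ 2 :=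
          Finset.single_le_sum (f := fun a => ∑ b, A a b ^ 2) (fun a _ => by positivity)
            (Finset.mem_univ i)
  rw [← Real.sqrt_sq_eq_abs]
  exact Real.sqrt_le_sqrt h

lemma sum_abs_pow_le_frob_pow (A : Matrix (Fin m) (Fin n) ℝ) {p : ℕ} (hp : 2 ≤ p) :
    ∑ i, ∑ j, |A i j| ^ p ≤ frob A ^ p := by
  obtain ⟨q, rfl⟩ := Nat.exists_eq_add_of_le' hp
  calc ∑ i, ∑ j, |A i j| ^ (q + 2) ≤ ∑ i, ∑ j, A i j ^ 2 * frob A ^ q := by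
        gcongr with i _ j _
        rw [pow_add, mul_comm, sq_abs]
        gcongr
        exact abs_apply_le_frob A i j
    _ = frob A ^ 2 * frob A ^ q := by
        rw [frob_sq]
        simp only [Finset.sum_mul]
    _ = frob A ^ (q + 2) := by ring

lemma frob_single_one_mul {k : ℕ} (i : Fin k) (j : Fin m) (B : Matrix (Fin m) (Fin n) ℝ) :
    frob (single i j (1 : ℝ) * B) = √(∑ l, B j l ^ 2) := by
  unfold frob
  congr 1
  rw [Finset.sum_eq_single i (fun a _ ha => by simp [single_mul_apply_of_ne _ _ _ _ _ ha])
    (by simp)]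
  simp

end frob

lemma lev_eq_sum_sq {d r : ℕ} (k : Fin d) (X : Matrix (Fin d) (Fin r) ℝ) :
    lev k X = ∑ l, (X * (psdSqrtOld (posSemidef_conjTranspose_mul_self X))⁻¹) k l ^ 2 := by
  set S := psdSqrtOld (posSemidef_conjTranspose_mul_self X)
  have hS : (S⁻¹)ᴴ = S⁻¹ := by
    rw [conjTranspose_nonsing_inv, (psdSqrtOld_isHermitian _).eq]
  have hSS : S⁻¹ * S⁻¹ = (Xᴴ * X)⁻¹ := by
    rw [← Matrix.mul_inv_rev, psdSqrtOld_mul_self]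
  have hB : (X * S⁻¹) * (X * S⁻¹)ᴴ = X * (Xᴴ * X)⁻¹ * Xᴴ := by
    rw [conjTranspose_mul, hS, Matrix.mul_assoc, ← Matrix.mul_assoc S⁻¹ S⁻¹ Xᴴ, hSS,
      ← Matrix.mul_assoc]
  rw [lev, ← hB]
  simp only [mul_apply, conjTranspose_apply, sq, star_trivial]

lemma lev_nonneg {d r : ℕ} (k : Fin d) (X : Matrix (Fin d) (Fin r) ℝ) : 0 ≤ lev k X := by
  rw [lev_eq_sum_sq]
  positivity

lemma dualNorm_SG_le {d r : ℕ} (X Z : Matrix (Fin d) (Fin r) ℝ) {gmax : ℝ}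
    (hg : ∀ i, lev i X ≤ gmax) (i j : Fin d) :
    dualNorm X (SG X Z i j) ≤ 4 * (d : ℝ) ^ 2 * √gmax * |(X * Xᴴ - Z * Zᴴ) i j| := by
  set B := X * (psdSqrtOld (posSemidef_conjTranspose_mul_self X))⁻¹
  set M := X * Xᴴ - Z * Zᴴ
  have hrow : ∀ i' j' : Fin d, frob (single i' j' (1 : ℝ) * B) ≤ √gmax := fun i' j' => by
    rw [frob_single_one_mul, ← lev_eq_sum_sq]
    exact Real.sqrt_le_sqrt (hg j')
  have hpair : frob ((single i j (1 : ℝ) + single j i (1 : ℝ)) * B) ≤ 2 * √gmax := by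
    rw [Matrix.add_mul]
    linarith [frob_add_le (single i j (1 : ℝ) * B) (single j i (1 : ℝ) * B), hrow i j, hrow j i]
  calc dualNorm X (SG X Z i j)
      = 2 * (d : ℝ) ^ 2 * |M i j| * frob ((single i j (1 : ℝ) + single j i (1 : ℝ)) * B) := by
        rw [dualNorm, SG, smul_mul, frob_smul, Matrix.mul_assoc, abs_mul,
          abs_of_nonneg (by positivity : (0 : ℝ) ≤ 2 * (d : ℝ) ^ 2)]
    _ ≤ 2 * (d : ℝ) ^ 2 * |M i j| * (2 * √gmax) := by gcongr
    _ = 4 * (d : ℝ) ^ 2 * √gmax * |M i j| := by ring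

theorem SG_pth_moment_general {d r : ℕ} (X Z : Matrix (Fin d) (Fin r) ℝ) (gmax : ℝ)
    (hg : ∀ i, lev i X ≤ gmax) :
    ∀ p : ℕ, 2 ≤ p →
      ((d : ℝ) ^ 2)⁻¹ * ∑ i : Fin d, ∑ j : Fin d, dualNorm X (SG X Z i j) ^ p
        ≤ 2 ^ (2 * p) * (d : ℝ) ^ (2 * (p - 1)) * gmax ^ ((p : ℝ) / 2)
            * frob (X * Xᴴ - Z * Zᴴ) ^ p := by
  intro p hp
  rcases Nat.eq_zero_or_pos d with rfl | hd
  · simp [zero_pow (show 2 * (p - 1) ≠ 0 by omega)]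
  have hg0 : 0 ≤ gmax := (lev_nonneg ⟨0, hd⟩ X).trans (hg ⟨0, hd⟩)
  set M := X * Xᴴ - Z * Zᴴ
  set c := 4 * (d : ℝ) ^ 2 * √gmax
  have hterm : ∀ i j, dualNorm X (SG X Z i j) ^ p ≤ c ^ p * |M i j| ^ p := fun i j => by
    rw [← mul_pow]
    exact pow_le_pow_left₀ (frob_nonneg _) (dualNorm_SG_le X Z hg i j) p
  obtain ⟨q, rfl⟩ := Nat.exists_eq_add_of_le' hp
  calc ((d : ℝ) ^ 2)⁻¹ * ∑ i, ∑ j, dualNorm X (SG X Z i j) ^ (q + 2)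
      ≤ ((d : ℝ) ^ 2)⁻¹ * (c ^ (q + 2) * ∑ i, ∑ j, |M i j| ^ (q + 2)) := by
        simp only [Finset.mul_sum]
        gcongr with i _ j _
        exact hterm i j
    _ ≤ ((d : ℝ) ^ 2)⁻¹ * (c ^ (q + 2) * frob M ^ (q + 2)) := by
        gcongr
        exact sum_abs_pow_le_frob_pow M hp
    _ = _ := by
        rw [Real.rpow_div_two_eq_sqrt _ hg0, Real.rpow_natCast, pow_mul,
          show 2 * (q + 2 - 1) = 2 * q + 2 by omega]
        field_simp
        simp only [c]
        ring

/-- `p`-th moment bound on the stochastic gradient in the dual local norm. -/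
theorem SG_pth_moment {d r : ℕ} (X Z : Matrix (Fin d) (Fin r) ℝ) (gmax : ℝ)
    (hX : IsUnit (Xᴴ * X).det) (hg : ∀ i, lev i X ≤ gmax) :
    ∀ p : ℕ, 2 ≤ p →
      ((d : ℝ) ^ 2)⁻¹ * ∑ i : Fin d, ∑ j : Fin d, dualNorm X (SG X Z i j) ^ p
        ≤ 2 ^ (2 * p) * (d : ℝ) ^ (2 * (p - 1)) * gmax ^ ((p : ℝ) / 2)
            * frob (X * Xᴴ - Z * Zᴴ) ^ p :=
  SG_pth_moment_general X Z gmax hg
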